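/- arXiv:1305.5899 — 3 statements merged into one kernel-verified Lean document; each statement's English description precedes it below -/
import Mathlib

section
/- For every n ≥ 2 and every natural number N, there exists a simple bipolar fuzzy hypergraph on a vertex set of size n with at least N distinct edges; i.e., there is no upper bound on the number of edges of a simple bipolar fuzzy hypergraph in terms of its order. -/
/-- A bipolar fuzzy set on `V` is a pair `(μP, μN)` of real-valued membership maps. -/
abbrev BipolarFuzzySet (V : Type*) := (V → ℝ) × (V → ℝ)

/-- Support of a bipolar fuzzy set. -/
def bsupp {V : Type*} (A : BipolarFuzzySet V) : Set V := {x | 0 < A.1 x ∨ A.2 x < 0}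

lemma aux_inv_le {i j : ℕ} (h : (1:ℝ)/(i+1) ≤ 1/(j+1)) : j ≤ i := by
  by_contra hc
  push_neg at hc
  have hji : (i:ℝ) + 1 < (j:ℝ) + 1 := by
    have : (i:ℝ) < j := by exact_mod_cast hc
    linarith
  have : (1:ℝ)/(j+1) < 1/(i+1) := by
    apply one_div_lt_one_div_of_lt (by positivity) hji
  linarith

/-- For every `n ≥ 2` and every `N`, there is a simple bipolar fuzzy hypergraph on a
vertex set of size `n` with at least `N` distinct edges: there is no upper bound on the
number of edges of a simple bipolar fuzzy hypergraph in terms of its order. -/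
theorem no_bound_on_edges_of_simple_bfh (n N : ℕ) (hn : 2 ≤ n) :
    ∃ E : Set (BipolarFuzzySet (Fin n)),
      E.Finite ∧ N ≤ E.ncard ∧
      (∀ A ∈ E, ∀ x, 0 ≤ A.1 x ∧ A.1 x ≤ 1 ∧ -1 ≤ A.2 x ∧ A.2 x ≤ 0) ∧
      (∀ A ∈ E, bsupp A ≠ ∅) ∧
      (⋃ A ∈ E, bsupp A) = Set.univ ∧
      (∀ A ∈ E, ∀ B ∈ E, (∀ x, A.1 x ≤ B.1 x) → (∀ x, B.2 x ≤ A.2 x) → A = B) := by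
  set f : ℕ → BipolarFuzzySet (Fin n) :=
    fun i => (fun _ => (1:ℝ)/(i+1), fun _ => -(i:ℝ)/(i+1)) with hf
  have hpos : ∀ i : ℕ, (0:ℝ) < 1/(i+1) := by intro i; positivity
  have hinj : Function.Injective f := by
    intro i j hij
    have h1 : (1:ℝ)/(i+1) = 1/(j+1) := congrFun (congrArg Prod.fst hij) ⟨0, by omega⟩
    exact le_antisymm (aux_inv_le h1.ge) (aux_inv_le h1.le)
  refine ⟨f '' Set.Iic N, (Set.finite_Iic N).image f, ?_, ?_, ?_, ?_, ?_⟩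
  · rw [Set.ncard_image_of_injective _ hinj, ← Finset.coe_Iic, Set.ncard_coe_finset, Nat.card_Iic]
    omega
  · rintro A ⟨i, -, rfl⟩ x
    have h1 : (1:ℝ) ≤ (i:ℝ) + 1 := by
      have : (0:ℝ) ≤ i := Nat.cast_nonneg i
      linarith
    have h2 : (0:ℝ) ≤ i := Nat.cast_nonneg i
    simp only [hf]
    refine ⟨(hpos i).le, ?_, ?_, ?_⟩
    · rw [div_le_one (by positivity)]; linarith
    · rw [neg_div, neg_le, neg_neg, div_le_one (by positivity)]; linarith
    · rw [neg_div, neg_nonpos]; positivity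
  · rintro A ⟨i, -, rfl⟩ h
    have hmem : (⟨0, by omega⟩ : Fin n) ∈ bsupp (f i) := Or.inl (hpos i)
    rw [h] at hmem
    exact hmem
  · ext x
    simp only [Set.mem_iUnion, Set.mem_univ, iff_true]
    exact ⟨f 0, ⟨0, by simp, rfl⟩, Or.inl (hpos 0)⟩
  · rintro A ⟨i, -, rfl⟩ B ⟨j, -, rfl⟩ h1 h2
    have hji : j ≤ i := aux_inv_le (h1 ⟨0, by omega⟩)
    have h2' : -(j:ℝ)/(j+1) ≤ -(i:ℝ)/(i+1) := h2 ⟨0, by omega⟩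
    have hij : i ≤ j := by
      by_contra hc
      push_neg at hc
      have hji' : (j:ℝ) < i := by exact_mod_cast hc
      have hj1 : (0:ℝ) < (j:ℝ)+1 := by positivity
      have hi1 : (0:ℝ) < (i:ℝ)+1 := by positivity
      rw [neg_div, neg_div, neg_le_neg_iff, div_le_div_iff₀ hi1 hj1] at h2'
      nlinarith
    exact congrArg f (le_antisymm hij hji)
end

section
/- For every n ≥ 2 and every N, there exists a support simple bipolar fuzzy hypergraph of order n with at least N edges, since every simple bipolar fuzzy hypergraph is support simple. -/
/-- For every `n ≥ 2` and every `N`, there is a support simple bipolar fuzzy hypergraph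
of order `n` with at least `N` distinct edges: there is no upper bound on the number of
edges of a support simple bipolar fuzzy hypergraph in terms of its order. -/
theorem no_bound_on_edges_of_supportSimple_bfh (n N : ℕ) (hn : 2 ≤ n) :
    ∃ E : Set (BipolarFuzzySet (Fin n)),
      E.Finite ∧ N ≤ E.ncard ∧
      (∀ A ∈ E, ∀ x, 0 ≤ A.1 x ∧ A.1 x ≤ 1 ∧ -1 ≤ A.2 x ∧ A.2 x ≤ 0) ∧
      (∀ A ∈ E, bsupp A ≠ ∅) ∧
      (⋃ A ∈ E, bsupp A) = Set.univ ∧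
      (∀ A ∈ E, ∀ B ∈ E, bsupp A = bsupp B →
        (∀ x, A.1 x ≤ B.1 x) → (∀ x, B.2 x ≤ A.2 x) → A = B) := by
  set M : ℕ := max N 1 with hM
  have hM1 : 1 ≤ M := le_max_right _ _
  set e0 : Fin n := ⟨0, by omega⟩ with he0
  set e1 : Fin n := ⟨1, by omega⟩ with he1
  have he01 : e1 ≠ e0 := by simp [he0, he1, Fin.ext_iff]
  set a : ℕ → ℝ := fun k => (k + 1) / (M + 1) with ha
  have hamono : StrictMono a := by
    intro i j hij
    have : (i : ℝ) < j := by exact_mod_cast hij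
    simp only [ha]
    gcongr
  have hapos : ∀ k, 0 < a k := by intro k; positivity
  have halt1 : ∀ k < M, a k < 1 := by
    intro k hk
    rw [ha, div_lt_one (by positivity)]
    have : (k : ℝ) < M := by exact_mod_cast hk
    linarith
  set A : ℕ → BipolarFuzzySet (Fin n) := fun k =>
    (fun x => if x = e0 then a k else 1 - a k, fun _ => 0) with hA
  have hApos : ∀ k < M, ∀ x : Fin n, 0 < (A k).1 x := by
    intro k hk x
    simp only [hA]
    split
    · exact hapos k
    · linarith [halt1 k hk]
  refine ⟨A '' Set.Iio M, (Set.finite_Iio M).image _, ?_, ?_, ?_, ?_, ?_⟩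
  · have hinj : Set.InjOn A (Set.Iio M) := by
      intro i _ j _ hij
      have h0 := congrFun (congrArg Prod.fst hij) e0
      simp only [hA, if_pos rfl] at h0
      exact hamono.injective h0
    rw [Set.ncard_image_of_injOn hinj]
    have : Set.Iio M = ↑(Finset.Iio M) := by simp
    rw [this, Set.ncard_coe_finset]
    simp
    exact le_max_left _ _
  · rintro B ⟨k, hk, rfl⟩ x
    refine ⟨(hApos k hk x).le, ?_, ?_, ?_⟩
    · simp only [hA]
      split
      · exact (halt1 k hk).le
      · linarith [hapos k]
    · simp [hA]
    · simp [hA]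
  · rintro B ⟨k, hk, rfl⟩ h
    have : e0 ∈ bsupp (A k) := Or.inl (hApos k hk e0)
    rw [h] at this
    exact this
  · ext x
    simp only [Set.mem_iUnion, Set.mem_univ, iff_true]
    exact ⟨A 0, ⟨0, hM1, rfl⟩, Or.inl (hApos 0 hM1 x)⟩
  · rintro B ⟨i, hi, rfl⟩ C ⟨j, hj, rfl⟩ _ h1 _
    have h0 := h1 e0
    have hone := h1 e1
    simp only [hA, if_pos rfl, if_neg he01] at h0 hone
    have : a i = a j := le_antisymm h0 (by linarith)
    have : i = j := hamono.injective this
    rw [this]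
end

section
/- If H is an elementary bipolar fuzzy hypergraph, then H is ordered, i.e., the fundamental sequence of level hypergraphs of H forms an increasing chain H_{(s_1,r_1)} ⊆ H_{(s_2,r_2)} ⊆ ... ⊆ H_{(s_n,r_n)} (each level hypergraph is a subhypergraph of the next). -/
/-- An elementary bipolar fuzzy set: single positive value and single negative value on
the support, `(0,0)` off it. -/
def IsElementaryBFS {V : Type*} (A : BipolarFuzzySet V) : Prop :=
  ∃ p q : ℝ, 0 < p ∧ q < 0 ∧
    (∀ x ∈ bsupp A, A.1 x = p ∧ A.2 x = q) ∧
    (∀ x ∉ bsupp A, A.1 x = 0 ∧ A.2 x = 0)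

/-- The `(α,β)`-level of an edge. -/
def blevel {V : Type*} (A : BipolarFuzzySet V) (α β : ℝ) : Set V :=
  {x | α ≤ A.1 x ∨ A.2 x ≤ β}

/-- The edge set of the `(α,β)`-level hypergraph. -/
def levelEdges {V : Type*} (E : Set (BipolarFuzzySet V)) (α β : ℝ) : Set (Set V) :=
  {S | S ≠ ∅ ∧ ∃ A ∈ E, blevel A α β = S}

/-- The vertex set of the `(α,β)`-level hypergraph. -/
def levelVerts {V : Type*} (E : Set (BipolarFuzzySet V)) (α β : ℝ) : Set V :=
  ⋃ S ∈ levelEdges E α β, S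


lemma blevel_eq_bsupp {V : Type*} {A : BipolarFuzzySet V} (hA : IsElementaryBFS A)
    {α β : ℝ} (hα : 0 < α) (hβ : β < 0) {x : V} (hx : x ∈ blevel A α β) :
    blevel A α β = bsupp A := by
  obtain ⟨p, q, hp, hq, hon, hoff⟩ := hA
  have hxs : x ∈ bsupp A := by
    by_contra h
    obtain ⟨h1, h2⟩ := hoff x h
    rcases hx with h | h <;> simp [h1, h2] at h <;> linarith
  obtain ⟨hx1, hx2⟩ := hon x hxs
  have hcond : α ≤ p ∨ q ≤ β := by
    rcases hx with h | h
    · exact Or.inl (hx1 ▸ h)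
    · exact Or.inr (hx2 ▸ h)
  ext y
  constructor
  · intro hy
    by_contra h
    obtain ⟨h1, h2⟩ := hoff y h
    rcases hy with h' | h' <;> simp [h1, h2] at h' <;> linarith
  · intro hy
    obtain ⟨h1, h2⟩ := hon y hy
    rcases hcond with h | h
    · exact Or.inl (by rw [h1]; exact h)
    · exact Or.inr (by rw [h2]; exact h)

/-- If `H` is an elementary bipolar fuzzy hypergraph, then `H` is ordered: as the
thresholds weaken (`α` decreases in `(0,1]`, `β` increases in `[-1,0)`), the level
hypergraphs form an increasing chain (each level hypergraph is a subhypergraph of the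
next), so in particular the fundamental sequence of level hypergraphs of `H` is an
increasing chain. -/
theorem elementary_bfh_is_ordered {V : Type*} (E : Set (BipolarFuzzySet V))
    (helem : ∀ A ∈ E, IsElementaryBFS A)
    (α₁ β₁ α₂ β₂ : ℝ) (hα₂ : 0 < α₂) (hα : α₂ ≤ α₁) (hα₁ : α₁ ≤ 1)
    (hβ₁ : -1 ≤ β₁) (hβ : β₁ ≤ β₂) (hβ₂ : β₂ < 0) :
    levelVerts E α₁ β₁ ⊆ levelVerts E α₂ β₂ ∧
    levelEdges E α₁ β₁ ⊆ levelEdges E α₂ β₂ := by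
  have hedge : levelEdges E α₁ β₁ ⊆ levelEdges E α₂ β₂ := by
    rintro S ⟨hSne, A, hAE, hAS⟩
    refine ⟨hSne, A, hAE, ?_⟩
    obtain ⟨x, hx⟩ := Set.nonempty_iff_ne_empty.mpr hSne
    rw [← hAS] at hx
    have h1 := blevel_eq_bsupp (helem A hAE) (lt_of_lt_of_le hα₂ hα) (lt_of_le_of_lt hβ hβ₂) hx
    have hx2 : x ∈ blevel A α₂ β₂ := by
      rcases hx with h | h
      · exact Or.inl (le_trans hα h)
      · exact Or.inr (le_trans h hβ)
    have h2 := blevel_eq_bsupp (helem A hAE) hα₂ hβ₂ hx2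
    rw [h2, ← h1, hAS]
  refine ⟨?_, hedge⟩
  intro v hv
  simp only [levelVerts, Set.mem_iUnion] at hv ⊢
  obtain ⟨S, hS, hvS⟩ := hv
  exact ⟨S, hedge hS, hvS⟩
end
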